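/- arXiv:1701.07155 — 3 statements merged into one kernel-verified Lean document; each statement's English description precedes it below -/
import Mathlib

section
/- Let V, W ⊆ S^d be equivalent polybox codes. If there exist i ∈ [d], l ∈ S and a word w ∈ W \ (W^{i,l} ∪ W^{i,l'}) such that the set U^{i,l} = {v ∈ V^{i,l} : v̆ ∩ w̆ ≠ ∅} is non-empty, then the codes U^{i,l}_{i^c} and U^{i,l'}_{i^c} are w_{i^c}-equivalent, where U^{i,l'} = {v ∈ V^{i,l'} : v̆ ∩ w̆ ≠ ∅}. -/
/-- Two words `u, v ∈ S^d` are dichotomous if `v j = (u j)'` for some coordinate `j`. -/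
def Dichotomous {S : Type*} (c : S → S) {d : ℕ} (u v : Fin d → S) : Prop :=
  ∃ j, v j = c (u j)

/-- Two words form a twin pair if they differ by complementation at exactly one
coordinate and agree elsewhere. -/
def TwinPair {S : Type*} (c : S → S) {d : ℕ} (u v : Fin d → S) : Prop :=
  ∃ j, v j = c (u j) ∧ ∀ i, i ≠ j → u i = v i

/-- A polybox code: a set of pairwise dichotomous words. -/
def PolyboxCode {S : Type*} (c : S → S) {d : ℕ} (V : Finset (Fin d → S)) : Prop :=
  ∀ u ∈ V, ∀ v ∈ V, u ≠ v → Dichotomous c u v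

/-- A code without twin pairs. -/
def TwinPairFree {S : Type*} (c : S → S) {d : ℕ} (V : Finset (Fin d → S)) : Prop :=
  ∀ u ∈ V, ∀ v ∈ V, ¬ TwinPair c u v

/-- `ES`: the collection of all `B ⊆ S` containing exactly one letter from each
complementary pair `{s, s'}`. -/
def ESet {S : Type*} (c : S → S) : Set (Set S) :=
  {B | ∀ s : S, Xor' (s ∈ B) (c s ∈ B)}

/-- The equicomplementary realization `v̆ = Ev₁ × ⋯ × Ev_d` of a word `v`,
where `Es = {B ∈ ES : s ∈ B}`. -/
def WordBox {S : Type*} (c : S → S) {d : ℕ} (v : Fin d → S) : Set (Fin d → Set S) :=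
  {x | ∀ i, x i ∈ ESet c ∧ v i ∈ x i}

/-- `⋃ E(V)`, the union of the equicomplementary realizations of the words of `V`. -/
def CodeReal {S : Type*} (c : S → S) {d : ℕ} (V : Finset (Fin d → S)) :
    Set (Fin d → Set S) :=
  ⋃ v ∈ V, WordBox c v

/-- The word `w` is covered by the code `V`, i.e. `w̆ ⊆ ⋃ E(V)`. -/
def Covered {S : Type*} (c : S → S) {d : ℕ} (w : Fin d → S)
    (V : Finset (Fin d → S)) : Prop :=
  WordBox c w ⊆ CodeReal c V

/-- Codes `V` and `W` are equivalent: `⋃ E(V) = ⋃ E(W)`. -/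
def EquivalentCodes {S : Type*} (c : S → S) {d : ℕ} (V W : Finset (Fin d → S)) : Prop :=
  CodeReal c V = CodeReal c W

/-- The cylinder realization of a word over the coordinates in `I` only: this is
`⋃`-compatible stand-in for the realization of the restricted word `v_I`; for
`I = {i}ᶜ` it realizes `v_{i^c}` (the word with the `i`-th letter deleted) as a
cylinder, so that statements about realizations of deleted codes become statements
about these cylinders. -/
def BoxOn {S : Type*} (c : S → S) {d : ℕ} (I : Set (Fin d)) (v : Fin d → S) :
    Set (Fin d → Set S) :=
  {x | ∀ i ∈ I, x i ∈ ESet c ∧ v i ∈ x i}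

/-!
Let `x` lie in `w̆_{i^c}` and in `v̆_{i^c}` for some `v ∈ U^{i,l}`. Since `w_i ∉ {l, l'}`, some
`B ∈ ES` contains both `w_i` and `l'`. Putting `B` in the `i`-th coordinate of `x` gives a point
of `w̆ ⊆ ⋃ E(V)`, hence of some `v̆'` with `v' ∈ V`; as `l ∉ B`, `v' ≠ v`. The coordinate where
`v` and `v'` are complementary cannot lie off `i`, since `x` meets both `v̆_{i^c}` and
`v̆'_{i^c}`, so `v'_i = l'` and `v' ∈ U^{i,l'}`. Exchanging `l` and `l'` gives the reverse
inclusion.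
-/

section

variable {S : Type*} {c : S → S} {d : ℕ}

theorem mem_ESet_iff {B : Set S} : B ∈ ESet c ↔ ∀ s, s ∉ B ↔ c s ∈ B :=
  forall_congr' fun s => xor_iff_not_iff' (a := s ∈ B)

theorem apply_notMem_of_mem_ESet {B : Set S} (hB : B ∈ ESet c) {s : S} (hs : s ∈ B) :
    c s ∉ B :=
  fun hcs => ((mem_ESet_iff.1 hB s).2 hcs) hs

theorem exists_ESet_superset (hinv : ∀ s, c (c s) = s) (hnfix : ∀ s, c s ≠ s) {A : Set S}
    (hA : ∀ a ∈ A, c a ∉ A) : ∃ B ∈ ESet c, A ⊆ B := by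
  -- a well-order picks one letter of each pair `{u, c u}` that `A` leaves undecided
  let := WellOrderingRel.isWellOrder (α := S) |>.linearOrder
  refine ⟨{u | u ∈ A ∨ c u ∉ A ∧ u < c u}, mem_ESet_iff.2 fun u => ?_, fun a ha => Or.inl ha⟩
  have := hA u
  have := hA (c u)
  have := hnfix u
  simp only [Set.mem_ofPred_eq, hinv]
  grind

theorem exists_ESet_mem_mem (hinv : ∀ s, c (c s) = s) (hnfix : ∀ s, c s ≠ s) {s t : S}
    (hst : t ≠ c s) : ∃ B ∈ ESet c, s ∈ B ∧ t ∈ B := by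
  obtain ⟨B, hB, hsub⟩ := exists_ESet_superset hinv hnfix (A := {s, t}) <| by
    have hts : c t ≠ s := fun h => hst (by rw [← h, hinv])
    simp only [Set.mem_insert_iff, Set.mem_singleton_iff]
    rintro a (rfl | rfl)
    exacts [not_or.2 ⟨hnfix a, hst.symm⟩, not_or.2 ⟨hts, hnfix a⟩]
  exact ⟨B, hB, hsub (by simp), hsub (by simp)⟩

theorem update_mem_WordBox {i : Fin d} {v : Fin d → S} {x : Fin d → Set S}
    (hx : x ∈ BoxOn c {i}ᶜ v) {B : Set S} (hB : B ∈ ESet c) (hvB : v i ∈ B) :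
    Function.update x i B ∈ WordBox c v := by
  intro j
  rcases eq_or_ne j i with rfl | hj
  · simpa using ⟨hB, hvB⟩
  · simpa [hj] using hx j hj

theorem mem_BoxOn_of_update_mem_WordBox {i : Fin d} {v : Fin d → S} {x : Fin d → Set S}
    {B : Set S} (hx : Function.update x i B ∈ WordBox c v) : x ∈ BoxOn c {i}ᶜ v := by
  intro j hj
  simpa [Function.update_of_ne (Set.mem_compl_singleton_iff.1 hj)] using hx j

theorem Dichotomous.exists_notMem_of_BoxOn {I : Set (Fin d)} {u v : Fin d → S}
    (huv : Dichotomous c u v) {x : Fin d → Set S} (hu : x ∈ BoxOn c I u)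
    (hv : x ∈ BoxOn c I v) : ∃ j ∉ I, v j = c (u j) := by
  obtain ⟨j, hj⟩ := huv
  refine ⟨j, fun hjI => ?_, hj⟩
  exact apply_notMem_of_mem_ESet (hu j hjI).1 (hu j hjI).2 (hj ▸ (hv j hjI).2)

variable (c) in
/-- The code `U^{i,l}`. -/
def meetingSlice (V : Finset (Fin d → S)) (i : Fin d) (l : S) (w : Fin d → S) :
    Set (Fin d → S) :=
  {v | v ∈ V ∧ v i = l ∧ (WordBox c v ∩ WordBox c w).Nonempty}

theorem BoxOn_inter_biUnion_meetingSlice_subset (hinv : ∀ s, c (c s) = s)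
    (hnfix : ∀ s, c s ≠ s) {V : Finset (Fin d → S)} (hV : PolyboxCode c V) {w : Fin d → S}
    (hwV : Covered c w V) {i : Fin d} {l : S} (hwl : w i ≠ l) :
    BoxOn c {i}ᶜ w ∩ ⋃ v ∈ meetingSlice c V i l w, BoxOn c {i}ᶜ v ⊆
      BoxOn c {i}ᶜ w ∩ ⋃ v ∈ meetingSlice c V i (c l) w, BoxOn c {i}ᶜ v := by
  rintro x ⟨hxw, hxU⟩
  obtain ⟨v, ⟨hvV, hvi, -⟩, hxv⟩ := Set.mem_iUnion₂.1 hxU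
  obtain ⟨B, hB, hclB, hwB⟩ := exists_ESet_mem_mem hinv hnfix (s := c l) (t := w i)
    (by rwa [hinv])
  have hyw := update_mem_WordBox hxw hB hwB
  obtain ⟨v', hv'V, hyv'⟩ := Set.mem_iUnion₂.1 (hwV hyw)
  have hxv' := mem_BoxOn_of_update_mem_WordBox hyv'
  have hvv' : v ≠ v' := by
    rintro rfl
    have hlB : l ∈ B := by simpa [hvi] using (hyv' i).2
    exact apply_notMem_of_mem_ESet hB hclB (by rwa [hinv])
  obtain ⟨j, hj, hv'j⟩ := (hV v hvV v' hv'V hvv').exists_notMem_of_BoxOn hxv hxv'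
  rw [Set.notMem_compl_iff, Set.mem_singleton_iff] at hj
  subst hj
  exact ⟨hxw, Set.mem_biUnion ⟨hv'V, hvi ▸ hv'j, _, hyv', hyw⟩ hxv'⟩

end

theorem deleted_codes_w_equivalent_general {S : Type*}
    (c : S → S) (hinv : ∀ s, c (c s) = s) (hnfix : ∀ s, c s ≠ s)
    (d : ℕ) (V W : Finset (Fin d → S))
    (hVcode : PolyboxCode c V)
    (hequiv : EquivalentCodes c V W)
    (i : Fin d) (l : S) (w : Fin d → S) (hw : w ∈ W)
    (hwl : w i ≠ l) (hwl' : w i ≠ c l) :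
    BoxOn c ({i}ᶜ) w ∩
        (⋃ v ∈ {v : Fin d → S |
            v ∈ V ∧ v i = l ∧ (WordBox c v ∩ WordBox c w).Nonempty},
          BoxOn c ({i}ᶜ) v) =
      BoxOn c ({i}ᶜ) w ∩
        (⋃ v ∈ {v : Fin d → S |
            v ∈ V ∧ v i = c l ∧ (WordBox c v ∩ WordBox c w).Nonempty},
          BoxOn c ({i}ᶜ) v) := by
  have hcov : Covered c w V := by
    rw [Covered, hequiv]
    exact Set.subset_biUnion_of_mem (u := WordBox c) hw
  refine (BoxOn_inter_biUnion_meetingSlice_subset hinv hnfix hVcode hcov hwl).antisymm ?_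
  simpa only [hinv] using
    BoxOn_inter_biUnion_meetingSlice_subset hinv hnfix hVcode hcov hwl'

/-- Let `V, W ⊆ S^d` be equivalent polybox codes, `i ∈ [d]`, `l ∈ S`, and let
`w ∈ W \ (W^{i,l} ∪ W^{i,l'})` be such that `U^{i,l} = {v ∈ V^{i,l} : v̆ ∩ w̆ ≠ ∅}`
is nonempty. Then the codes `U^{i,l}_{i^c}` and `U^{i,l'}_{i^c}` are
`w_{i^c}`-equivalent (stated via cylinder realizations over the coordinates `≠ i`). -/
theorem deleted_codes_w_equivalent {S : Type*} [Fintype S] [DecidableEq S]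
    (c : S → S) (hinv : ∀ s, c (c s) = s) (hnfix : ∀ s, c s ≠ s)
    (d : ℕ) (V W : Finset (Fin d → S))
    (hVcode : PolyboxCode c V) (hWcode : PolyboxCode c W)
    (hequiv : EquivalentCodes c V W)
    (i : Fin d) (l : S) (w : Fin d → S) (hw : w ∈ W)
    (hwl : w i ≠ l) (hwl' : w i ≠ c l)
    (hne : {v : Fin d → S |
      v ∈ V ∧ v i = l ∧ (WordBox c v ∩ WordBox c w).Nonempty}.Nonempty) :
    BoxOn c ({i}ᶜ) w ∩
        (⋃ v ∈ {v : Fin d → S |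
            v ∈ V ∧ v i = l ∧ (WordBox c v ∩ WordBox c w).Nonempty},
          BoxOn c ({i}ᶜ) v) =
      BoxOn c ({i}ᶜ) w ∩
        (⋃ v ∈ {v : Fin d → S |
            v ∈ V ∧ v i = c l ∧ (WordBox c v ∩ WordBox c w).Nonempty},
          BoxOn c ({i}ᶜ) v) :=
  deleted_codes_w_equivalent_general c hinv hnfix d V W hVcode hequiv i l w hw hwl hwl'
end

section
/- Let V, W ⊆ S^d be equivalent polybox codes. Then for every i ∈ [d] and every l ∈ S, ⋃E(V^{i,l}_{i^c}) \ ⋃E(V^{i,l'}_{i^c}) = ⋃E(W^{i,l}_{i^c}) \ ⋃E(W^{i,l'}_{i^c}). -/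
section

variable {S : Type*} {c : S → S}

namespace ESet

lemma compl_notMem {B : Set S} (hB : B ∈ ESet c) {s : S} (hs : s ∈ B) : c s ∉ B :=
  (hB s).elim (fun h => h.2) (fun h => absurd hs h.2)

lemma nonempty (hinv : ∀ s, c (c s) = s) (hnfix : ∀ s, c s ≠ s) : (ESet c).Nonempty := by
  obtain ⟨_, -⟩ := exists_wellFoundedLT S
  refine ⟨{s | s < c s}, fun s => ?_⟩
  have hrev : c s ∈ {s | s < c s} ↔ c s < s := by rw [Set.mem_ofPred_eq, hinv]
  rw [Set.mem_ofPred_eq, hrev]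
  rcases (hnfix s).lt_or_gt with h | h
  · exact Or.inr ⟨h, h.not_gt⟩
  · exact Or.inl ⟨h, h.not_gt⟩

lemma exists_mem_of_ne_compl (hinv : ∀ s, c (c s) = s) (hnfix : ∀ s, c s ≠ s)
    {s t : S} (hst : t ≠ c s) : ∃ B ∈ ESet c, s ∈ B ∧ t ∈ B := by
  obtain ⟨H, hH⟩ := nonempty hinv hnfix
  -- overwrite the choices of `H` on the pairs `{s, s'}` and `{t, t'}`
  refine ⟨{u | u = s ∨ u = t ∨ (u ≠ c s ∧ u ≠ c t ∧ u ∈ H)}, fun u => ?_, Or.inl rfl,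
    Or.inr (Or.inl rfl)⟩
  have hHu : Xor (u ∈ H) (c u ∈ H) := hH u
  change Xor _ _
  simp only [xor_def, Set.mem_ofPred_eq] at hHu ⊢
  grind

end ESet

def lettersOver (c : S → S) {d : ℕ} (V : Finset (Fin d → S)) (i : Fin d)
    (x : Fin d → Set S) : Set S :=
  {s | ∃ v ∈ V, v i = s ∧ x ∈ BoxOn c {i}ᶜ v}

variable {d : ℕ} {V W : Finset (Fin d → S)} {i : Fin d} {x : Fin d → Set S}

lemma mem_iUnion_boxOn_iff {l : S} :
    x ∈ ⋃ v ∈ {v : Fin d → S | v ∈ V ∧ v i = l}, BoxOn c {i}ᶜ v ↔ l ∈ lettersOver c V i x := by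
  simp [lettersOver, and_assoc]

lemma update_mem_wordBox_iff {v : Fin d → S} {B : Set S} :
    Function.update x i B ∈ WordBox c v ↔ x ∈ BoxOn c {i}ᶜ v ∧ B ∈ ESet c ∧ v i ∈ B := by
  refine ⟨fun h => ⟨fun j hj => ?_, by simpa using h i⟩, fun ⟨hx, hB⟩ j => ?_⟩
  · simpa [Function.update_of_ne (Set.mem_compl_singleton_iff.mp hj)] using h j
  · rcases eq_or_ne j i with rfl | hj
    · simpa using hB
    · simpa [Function.update_of_ne hj] using hx j hj

lemma update_mem_codeReal_iff {B : Set S} :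
    Function.update x i B ∈ CodeReal c V ↔
      B ∈ ESet c ∧ (lettersOver c V i x ∩ B).Nonempty := by
  simp only [CodeReal, Set.mem_iUnion, update_mem_wordBox_iff, lettersOver]
  constructor
  · rintro ⟨v, hv, hx, hB, hvB⟩
    exact ⟨hB, v i, ⟨v, hv, rfl, hx⟩, hvB⟩
  · rintro ⟨hB, _, ⟨v, hv, rfl, hx⟩, hvB⟩
    exact ⟨v, hv, hx, hB, hvB⟩

namespace EquivalentCodes

lemma lettersOver_inter_nonempty_iff (h : EquivalentCodes c V W) {B : Set S}
    (hB : B ∈ ESet c) :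
    (lettersOver c V i x ∩ B).Nonempty ↔ (lettersOver c W i x ∩ B).Nonempty := by
  have := congrArg (Function.update x i B ∈ ·) h
  simpa [update_mem_codeReal_iff, hB] using this

lemma lettersOver_eq_singleton (hinv : ∀ s, c (c s) = s) (hnfix : ∀ s, c s ≠ s)
    (h : EquivalentCodes c V W) {l : S} (hV : lettersOver c V i x = {l}) :
    lettersOver c W i x = {l} := by
  have hmeet : ∀ B ∈ ESet c, (lettersOver c W i x ∩ B).Nonempty ↔ l ∈ B := fun B hB => by
    rw [← h.lettersOver_inter_nonempty_iff hB, hV, Set.singleton_inter_nonempty]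
  have hsub : lettersOver c W i x ⊆ {l} := fun t ht => by
    by_contra htl
    obtain ⟨B, hB, hlB, htB⟩ := ESet.exists_mem_of_ne_compl hinv hnfix (s := c l) (t := t)
      (by rwa [hinv])
    exact ESet.compl_notMem hB ((hmeet B hB).mp ⟨t, ht, htB⟩) hlB
  obtain ⟨B, hB, hlB, -⟩ := ESet.exists_mem_of_ne_compl hinv hnfix (hnfix l).symm
  obtain ⟨t, ht, -⟩ := (hmeet B hB).mpr hlB
  exact Set.Nonempty.subset_singleton_iff ⟨t, ht⟩ |>.mp hsub

lemma lettersOver_eq_singleton_iff (hinv : ∀ s, c (c s) = s) (hnfix : ∀ s, c s ≠ s)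
    (h : EquivalentCodes c V W) {l : S} :
    lettersOver c V i x = {l} ↔ lettersOver c W i x = {l} :=
  ⟨h.lettersOver_eq_singleton hinv hnfix, lettersOver_eq_singleton hinv hnfix h.symm⟩

end EquivalentCodes

namespace PolyboxCode

lemma lettersOver_subset_pair (hV : PolyboxCode c V) {l : S} (hl : l ∈ lettersOver c V i x) :
    lettersOver c V i x ⊆ {l, c l} := by
  obtain ⟨v, hv, rfl, hxv⟩ := hl
  rintro _ ⟨u, hu, rfl, hxu⟩
  rcases eq_or_ne v u with rfl | huv
  · exact Or.inl rfl
  obtain ⟨j, hj⟩ := hV v hv u hu huv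
  rcases eq_or_ne j i with rfl | hji
  · exact Or.inr hj
  -- the two words cannot be dichotomous where both boxes constrain `x`
  have hj' : j ∈ ({i}ᶜ : Set (Fin d)) := hji
  exact absurd (hj ▸ (hxu j hj').2) (ESet.compl_notMem (hxv j hj').1 (hxv j hj').2)

lemma lettersOver_eq_singleton_iff (hnfix : ∀ s, c s ≠ s) (hV : PolyboxCode c V) {l : S} :
    lettersOver c V i x = {l} ↔ l ∈ lettersOver c V i x ∧ c l ∉ lettersOver c V i x := by
  refine ⟨fun h => by simp [h, hnfix], fun ⟨hl, hcl⟩ => ?_⟩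
  refine Set.eq_singleton_iff_unique_mem.mpr ⟨hl, fun t ht => ?_⟩
  rcases hV.lettersOver_subset_pair hl ht with rfl | rfl
  · rfl
  · exact absurd ht hcl

end PolyboxCode

end

theorem deleted_codes_difference_eq_general {S : Type*}
    (c : S → S) (hinv : ∀ s, c (c s) = s) (hnfix : ∀ s, c s ≠ s)
    (d : ℕ) (V W : Finset (Fin d → S))
    (hVcode : PolyboxCode c V) (hWcode : PolyboxCode c W)
    (hequiv : EquivalentCodes c V W) :
    ∀ (i : Fin d) (l : S),
      (⋃ v ∈ {v : Fin d → S | v ∈ V ∧ v i = l}, BoxOn c ({i}ᶜ) v) \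
          (⋃ v ∈ {v : Fin d → S | v ∈ V ∧ v i = c l}, BoxOn c ({i}ᶜ) v) =
        (⋃ w ∈ {w : Fin d → S | w ∈ W ∧ w i = l}, BoxOn c ({i}ᶜ) w) \
          (⋃ w ∈ {w : Fin d → S | w ∈ W ∧ w i = c l}, BoxOn c ({i}ᶜ) w) := by
  intro i l
  ext x
  simp only [Set.mem_sdiff, mem_iUnion_boxOn_iff]
  rw [← hVcode.lettersOver_eq_singleton_iff hnfix, ← hWcode.lettersOver_eq_singleton_iff hnfix]
  exact hequiv.lettersOver_eq_singleton_iff hinv hnfix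

/-- Let `V, W ⊆ S^d` be equivalent polybox codes. Then for every `i ∈ [d]` and
`l ∈ S`, `⋃E(V^{i,l}_{i^c}) \ ⋃E(V^{i,l'}_{i^c}) = ⋃E(W^{i,l}_{i^c}) \ ⋃E(W^{i,l'}_{i^c})`
(stated via cylinder realizations over the coordinates `≠ i`). -/
theorem deleted_codes_difference_eq {S : Type*} [Fintype S] [DecidableEq S]
    (c : S → S) (hinv : ∀ s, c (c s) = s) (hnfix : ∀ s, c s ≠ s)
    (d : ℕ) (V W : Finset (Fin d → S))
    (hVcode : PolyboxCode c V) (hWcode : PolyboxCode c W)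
    (hequiv : EquivalentCodes c V W) :
    ∀ (i : Fin d) (l : S),
      (⋃ v ∈ {v : Fin d → S | v ∈ V ∧ v i = l}, BoxOn c ({i}ᶜ) v) \
          (⋃ v ∈ {v : Fin d → S | v ∈ V ∧ v i = c l}, BoxOn c ({i}ᶜ) v) =
        (⋃ w ∈ {w : Fin d → S | w ∈ W ∧ w i = l}, BoxOn c ({i}ᶜ) w) \
          (⋃ w ∈ {w : Fin d → S | w ∈ W ∧ w i = c l}, BoxOn c ({i}ᶜ) w) :=
  deleted_codes_difference_eq_general c hinv hnfix d V W hVcode hWcode hequiv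
end

section
/- Let V, W ⊆ S^d be disjoint equivalent polybox codes, let i ∈ [d], l ∈ S, and suppose the set U^{i,l} = {v ∈ V^{i,l} : v̆ ∩ ⋃E(W \ (W^{i,l} ∪ W^{i,l'})) ≠ ∅} is non-empty; define U^{i,l'} analogously. Assume there are disjoint sets A, B with [d] \ {i} = A ∪ B and words p (indexed by A) and q (indexed by B) such that: (i) w_A = p for every w ∈ W \ (W^{i,l} ∪ W^{i,l'}) with w̆ ∩ ⋃E(U^{i,l} ∪ U^{i,l'}) ≠ ∅; and (ii) (U^{i,l} ∪ U^{i,l'})_B = {q}. Let P = {w ∈ W \ (W^{i,l} ∪ W^{i,l'}) : w̆ ∩ ⋃E(U^{i,l} ∪ U^{i,l'}) ≠ ∅}. Then for every s ∈ S \ {l, l'} the codes P^{i,s}_{i^c} and P^{i,s'}_{i^c} are r-equivalent, where r is the word on [d] \ {i} with r_A = p and r_B = q. In particular, if |B| ≤ 1, then there is a twin pair in V or in W. -/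
/-- `W \ (W^{i,l} ∪ W^{i,l'})`: the words of `W` whose `i`-th letter is neither `l`
nor `l'`. -/
def WRest {S : Type*} (c : S → S) {d : ℕ} (W : Finset (Fin d → S)) (i : Fin d)
    (l : S) : Set (Fin d → S) :=
  {w | w ∈ W ∧ w i ≠ l ∧ w i ≠ c l}

/-- `U^{i,m}` (for `m ∈ {l, l'}`): the words `v ∈ V` with `v i = m` whose realization
meets `⋃ E(W \ (W^{i,l} ∪ W^{i,l'}))`. -/
def USet {S : Type*} (c : S → S) {d : ℕ} (V W : Finset (Fin d → S)) (i : Fin d)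
    (l m : S) : Set (Fin d → S) :=
  {v | v ∈ V ∧ v i = m ∧
    (WordBox c v ∩ ⋃ w ∈ WRest c W i l, WordBox c w).Nonempty}

/-- `P`: the words of `W \ (W^{i,l} ∪ W^{i,l'})` whose realization meets
`⋃ E(U^{i,l} ∪ U^{i,l'})`. -/
def PWords {S : Type*} (c : S → S) {d : ℕ} (V W : Finset (Fin d → S)) (i : Fin d)
    (l : S) : Set (Fin d → S) :=
  {w | w ∈ WRest c W i l ∧
    (WordBox c w ∩ ⋃ v ∈ USet c V W i l l ∪ USet c V W i l (c l),
      WordBox c v).Nonempty}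


/-!
Take `z ∈ r̆ ∩ w̆` (on the coordinates `≠ i`) with `w ∈ P`, and a word `v ∈ U^{i,l} ∪ U^{i,l'}`
meeting `w`. Keeping `z` on `B`, where `v = q = r`, one finds `Y ∈ v̆` that contains the letters of
`w` off `i` but not `w i`. As `⋃ E(V) = ⋃ E(W)`, some `w' ∈ W` has `Y ∈ w'̆`; the polybox property
forces `w' i = (w i)'`, so `w' ∈ P`, and `z ∈ w'̆` because `w' = p = r` on `A`.

If `|B| ≤ 1` and `W` has no twin pair, the words of `P` agree with `r` on `A`, so those with equal
`i`-th letters coincide and those with complementary `i`-th letters differ at the only `k ∈ B`.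
For one word `w` of such a pair, the partner's `k`-th letter also differs from `r k`; a point of
`r̆ ∩ w̆` whose letter set at `k` omits that letter then has no word of `P` to flip to.
-/

section ESet

variable {S : Type*} {c : S → S}

lemma ne_compl_of_mem_ESet {E : Set S} (hE : E ∈ ESet c) {a b : S} (ha : a ∈ E) (hb : b ∈ E) :
    b ≠ c a := by
  rintro rfl
  rcases hE a with ⟨-, h⟩ | ⟨-, h⟩ <;> contradiction

lemma exists_ESet_superset_s10 (hc : Function.Involutive c) (hnfix : ∀ s, c s ≠ s) {T : Set S}
    (hT : ∀ x ∈ T, c x ∉ T) : ∃ E ∈ ESet c, T ⊆ E := by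
  -- outside `T`, a well-order picks one letter of each complementary pair
  let R : S → S → Prop := WellOrderingRel
  refine ⟨{x | x ∈ T ∨ (c x ∉ T ∧ R x (c x))}, fun s => ?_, fun x hx => Or.inl hx⟩
  have hs := hT s
  have hcs := hT (c s)
  have htri := trichotomous_of R s (c s)
  have hasymm : R s (c s) → ¬ R (c s) s := asymm
  simp only [Set.mem_ofPred_eq, hc s] at hcs ⊢
  have := hnfix s
  tauto

lemma exists_ESet_pair (hc : Function.Involutive c) (hnfix : ∀ s, c s ≠ s) {a b : S}
    (h : b ≠ c a) : ∃ E ∈ ESet c, a ∈ E ∧ b ∈ E := by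
  obtain ⟨E, hE, hab⟩ := exists_ESet_superset_s10 (T := {a, b}) hc hnfix (by
    have hcc : ∀ s, c (c s) = s := hc
    simp only [Set.mem_insert_iff, Set.mem_singleton_iff]
    rintro x (rfl | rfl) <;> grind)
  exact ⟨E, hE, hab (by simp), hab (by simp)⟩

lemma exists_ESet_mem_mem_notMem (hc : Function.Involutive c) (hnfix : ∀ s, c s ≠ s)
    {a b e : S} (hab : b ≠ c a) (hea : e ≠ a) (heb : e ≠ b) :
    ∃ E ∈ ESet c, a ∈ E ∧ b ∈ E ∧ e ∉ E := by
  obtain ⟨E, hE, habe⟩ := exists_ESet_superset_s10 (T := {a, b, c e}) hc hnfix (by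
    have hcc : ∀ s, c (c s) = s := hc
    simp only [Set.mem_insert_iff, Set.mem_singleton_iff]
    rintro x (rfl | rfl | rfl) <;> grind)
  exact ⟨E, hE, habe (by simp), habe (by simp),
    fun he => ne_compl_of_mem_ESet hE (habe (by simp)) he (hc e).symm⟩

end ESet

section Boxes

variable {S : Type*} {c : S → S} {d : ℕ}

lemma ne_compl_of_mem_wordBox {u v : Fin d → S} {x : Fin d → Set S} (hu : x ∈ WordBox c u)
    (hv : x ∈ WordBox c v) (j : Fin d) : v j ≠ c (u j) :=
  ne_compl_of_mem_ESet (hu j).1 (hu j).2 (hv j).2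

lemma boxOn_anti {I J : Set (Fin d)} (hIJ : I ⊆ J) (v : Fin d → S) :
    BoxOn c J v ⊆ BoxOn c I v :=
  fun _ hz j hj => hz j (hIJ hj)

lemma boxOn_congr {I : Set (Fin d)} {u v : Fin d → S} (h : ∀ j ∈ I, u j = v j) :
    BoxOn c I u = BoxOn c I v := by
  ext z
  exact forall₂_congr fun j hj => by rw [h j hj]

lemma boxOn_inter_nonempty (hc : Function.Involutive c) (hnfix : ∀ s, c s ≠ s)
    {I : Set (Fin d)} {u v : Fin d → S} (h : ∀ j ∈ I, u j ≠ c (v j)) :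
    (BoxOn c I v ∩ BoxOn c I u).Nonempty := by
  have hE : ∀ j, ∃ E ∈ ESet c, j ∈ I → v j ∈ E ∧ u j ∈ E := by
    intro j
    by_cases hj : j ∈ I
    · obtain ⟨E, hE, hv, hu⟩ := exists_ESet_pair hc hnfix (h j hj)
      exact ⟨E, hE, fun _ => ⟨hv, hu⟩⟩
    · obtain ⟨E, hE, -⟩ := exists_ESet_pair hc hnfix (hnfix (v j)).symm
      exact ⟨E, hE, fun h => absurd h hj⟩
  choose z hzE hz using hE
  exact ⟨z, fun j hj => ⟨hzE j, (hz j hj).1⟩, fun j hj => ⟨hzE j, (hz j hj).2⟩⟩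

lemma update_mem_boxOn {I : Set (Fin d)} {u : Fin d → S} {z : Fin d → Set S}
    (hz : z ∈ BoxOn c I u) {k : Fin d} {F : Set S} (hF : F ∈ ESet c) (hk : u k ∈ F) :
    Function.update z k F ∈ BoxOn c I u := by
  intro j hj
  rcases eq_or_ne j k with rfl | hjk
  · simpa using ⟨hF, hk⟩
  · simpa [hjk] using hz j hj

lemma exists_mem_wordBox_notMem (hc : Function.Involutive c) (hnfix : ∀ s, c s ≠ s)
    {u v : Fin d → S} (huv : ∀ j, u j ≠ c (v j)) {i : Fin d} (hi : u i ≠ v i)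
    {B : Set (Fin d)} (hiB : i ∉ B) {z : Fin d → Set S}
    (hz : z ∈ BoxOn c B v ∩ BoxOn c B u) :
    ∃ Y ∈ WordBox c v, u i ∉ Y i ∧ (∀ j, j ≠ i → u j ∈ Y j) ∧ ∀ j ∈ B, Y j = z j := by
  have hY : ∀ j, ∃ E ∈ ESet c, v j ∈ E ∧ (j = i → u i ∉ E) ∧ (j ≠ i → u j ∈ E) ∧
      (j ∈ B → E = z j) := by
    intro j
    by_cases hjB : j ∈ B
    · have hji : j ≠ i := ne_of_mem_of_not_mem hjB hiB
      exact ⟨z j, (hz.1 j hjB).1, (hz.1 j hjB).2, (absurd · hji), fun _ => (hz.2 j hjB).2,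
        fun _ => rfl⟩
    rcases eq_or_ne j i with rfl | hji
    · obtain ⟨E, hE, hvE, -, huE⟩ := exists_ESet_mem_mem_notMem hc hnfix (hnfix (v j)).symm hi hi
      exact ⟨E, hE, hvE, fun _ => huE, (absurd rfl ·), (absurd · hjB)⟩
    · obtain ⟨E, hE, hvE, huE⟩ := exists_ESet_pair hc hnfix (huv j)
      exact ⟨E, hE, hvE, (absurd · hji), fun _ => huE, (absurd · hjB)⟩
  choose Y hYE hYv hYi hYu hYB using hY
  exact ⟨Y, fun j => ⟨hYE j, hYv j⟩, hYi i rfl, hYu, hYB⟩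

end Boxes

section Codes

variable {S : Type*} {c : S → S} {d : ℕ} {W : Finset (Fin d → S)}

lemma PolyboxCode.apply_eq_compl (hW : PolyboxCode c W) {u v : Fin d → S} (hu : u ∈ W)
    (hv : v ∈ W) {i : Fin d} (hi : u i ≠ v i)
    (h : ∀ j, j ≠ i → v j ≠ c (u j)) : v i = c (u i) := by
  obtain ⟨j, hj⟩ := hW u hu v hv fun huv => hi (huv ▸ rfl)
  rcases eq_or_ne j i with rfl | hji
  · exact hj
  · exact absurd hj (h j hji)

lemma TwinPairFree.eq_of_forall_ne_eq (hfree : TwinPairFree c W) (hW : PolyboxCode c W)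
    (hnfix : ∀ s, c s ≠ s) {u v : Fin d → S} (hu : u ∈ W) (hv : v ∈ W) {m : Fin d}
    (h : ∀ j, j ≠ m → u j = v j) : u = v := by
  by_contra huv
  obtain ⟨j, hj⟩ := hW u hu v hv huv
  rcases eq_or_ne j m with rfl | hjm
  · exact hfree u hu v hv ⟨j, hj, h⟩
  · exact hnfix (u j) ((h j hjm).trans hj).symm

end Codes

section FlipClosed

variable {S : Type*} {c : S → S} {d : ℕ}

/-- The inclusion behind the `r`-equivalence of `P^{i,s}_{i^c}` and `P^{i,s'}_{i^c}`. -/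
def IsFlipClosed (c : S → S) (r : Fin d → S) (P : Set (Fin d → S)) (i : Fin d) : Prop :=
  ∀ w ∈ P, ∀ z ∈ BoxOn c {i}ᶜ r, z ∈ BoxOn c {i}ᶜ w →
    ∃ w' ∈ P, w' i = c (w i) ∧ z ∈ BoxOn c {i}ᶜ w'

lemma IsFlipClosed.inter_biUnion_subset {r : Fin d → S} {P : Set (Fin d → S)} {i : Fin d}
    (hflip : IsFlipClosed c r P i) (s : S) :
    BoxOn c {i}ᶜ r ∩ (⋃ w ∈ {w | w ∈ P ∧ w i = s}, BoxOn c {i}ᶜ w) ⊆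
      BoxOn c {i}ᶜ r ∩ (⋃ w ∈ {w | w ∈ P ∧ w i = c s}, BoxOn c {i}ᶜ w) := by
  rintro z ⟨hzr, hz⟩
  obtain ⟨w, ⟨hwP, rfl⟩, hzw⟩ := Set.mem_iUnion₂.mp hz
  obtain ⟨w', hw'P, hw'i, hzw'⟩ := hflip w hwP z hzr hzw
  exact ⟨hzr, Set.mem_biUnion ⟨hw'P, hw'i⟩ hzw'⟩

lemma IsFlipClosed.apply_eq_or_apply_eq (hc : Function.Involutive c) (hnfix : ∀ s, c s ≠ s)
    {r : Fin d → S} {P : Set (Fin d → S)} {i : Fin d} (hflip : IsFlipClosed c r P i)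
    (huniq : ∀ u ∈ P, ∀ v ∈ P, u i = v i → u = v)
    (hcompat : ∀ w ∈ P, ∀ j ∈ ({i}ᶜ : Set (Fin d)), w j ≠ c (r j))
    {u v : Fin d → S} (hu : u ∈ P) (hv : v ∈ P) (huv : v i = c (u i)) {k : Fin d} (hki : k ≠ i) :
    v k = u k ∨ v k = r k := by
  by_contra! h
  obtain ⟨F, hF, hrF, huF, hvF⟩ := exists_ESet_mem_mem_notMem hc hnfix (hcompat u hu k hki) h.2 h.1
  obtain ⟨z, hzr, hzu⟩ := boxOn_inter_nonempty hc hnfix (hcompat u hu)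
  obtain ⟨w, hw, hwi, hzw⟩ := hflip u hu (Function.update z k F)
    (update_mem_boxOn hzr hF hrF) (update_mem_boxOn hzu hF huF)
  obtain rfl : w = v := huniq w hw v hv (hwi.trans huv.symm)
  exact hvF (by simpa using (hzw k hki).2)

lemma IsFlipClosed.exists_twinPair (hc : Function.Involutive c) (hnfix : ∀ s, c s ≠ s)
    {r : Fin d → S} {P : Set (Fin d → S)} {i : Fin d} (hflip : IsFlipClosed c r P i)
    {W : Finset (Fin d → S)} (hWcode : PolyboxCode c W) (hPW : P ⊆ W) (hP : P.Nonempty)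
    {B : Set (Fin d)} (hiB : i ∉ B) (hB : B.ncard ≤ 1)
    (hPr : ∀ w ∈ P, ∀ j, j ≠ i → j ∉ B → w j = r j) (hPB : ∀ w ∈ P, ∀ j ∈ B, w j ≠ c (r j)) :
    ∃ u ∈ W, ∃ v ∈ W, TwinPair c u v := by
  by_contra hnot
  have hfree : TwinPairFree c W := fun u hu v hv h => hnot ⟨u, hu, v, hv, h⟩
  have hagree : ∀ u ∈ P, ∀ v ∈ P, ∀ j, j ∉ B → j ≠ i → u j = v j := fun u hu v hv j hjB hji =>
    (hPr u hu j hji hjB).trans (hPr v hv j hji hjB).symm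
  have heq : ∀ u ∈ P, ∀ v ∈ P, ∀ m, (∀ j, j ≠ m → u j = v j) → u = v := fun u hu v hv _ h =>
    hfree.eq_of_forall_ne_eq hWcode hnfix (hPW hu) (hPW hv) h
  have hcompat : ∀ w ∈ P, ∀ j ∈ ({i}ᶜ : Set (Fin d)), w j ≠ c (r j) := fun w hw j hji => by
    by_cases hjB : j ∈ B
    · exact hPB w hw j hjB
    · rw [hPr w hw j hji hjB]
      exact (hnfix _).symm
  obtain ⟨w₀, hw₀⟩ := hP
  obtain ⟨z, hzr, hzw₀⟩ := boxOn_inter_nonempty hc hnfix (hcompat w₀ hw₀)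
  obtain ⟨w₁, hw₁, hw₁i, -⟩ := hflip w₀ hw₀ z hzr hzw₀
  have hne : w₀ i ≠ w₁ i := hw₁i ▸ (hnfix _).symm
  rcases (Set.ncard_le_one_iff_eq B.toFinite).mp hB with rfl | ⟨k, rfl⟩
  · exact hne (congrFun (heq w₀ hw₀ w₁ hw₁ i (hagree w₀ hw₀ w₁ hw₁ · (Set.notMem_empty _))) i)
  have hki : k ≠ i := fun h => hiB (h ▸ rfl)
  have huniq : ∀ u ∈ P, ∀ v ∈ P, u i = v i → u = v := fun u hu v hv h =>
    heq u hu v hv k fun j hjk => by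
      rcases eq_or_ne j i with rfl | hji
      · exact h
      · exact hagree u hu v hv j hjk hji
  have hk : w₁ k ≠ w₀ k := fun h => hne <| congrFun (heq w₀ hw₀ w₁ hw₁ i fun j hji => by
    rcases eq_or_ne j k with rfl | hjk
    · exact h.symm
    · exact hagree w₀ hw₀ w₁ hw₁ j hjk hji) i
  have hw₀i : w₀ i = c (w₁ i) := by rw [hw₁i, hc]
  rcases hflip.apply_eq_or_apply_eq hc hnfix huniq hcompat hw₀ hw₁ hw₁i hki with h₁ | h₁
  · exact hk h₁
  rcases hflip.apply_eq_or_apply_eq hc hnfix huniq hcompat hw₁ hw₀ hw₀i hki with h₀ | h₀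
  · exact hk h₀.symm
  · exact hk (h₁.trans h₀.symm)

end FlipClosed

section PWords

variable {S : Type*} {c : S → S} {d : ℕ} {V W : Finset (Fin d → S)} {i : Fin d} {l : S}

lemma PWords.nonempty (h : (USet c V W i l l).Nonempty) : (PWords c V W i l).Nonempty := by
  obtain ⟨v, hv⟩ := h
  obtain ⟨-, -, x, hxv, hxW⟩ := id hv
  obtain ⟨w, hw, hxw⟩ := Set.mem_iUnion₂.mp hxW
  exact ⟨w, hw, x, hxw, Set.mem_biUnion (Or.inl hv) hxv⟩

lemma PWords.ne_compl {B : Set (Fin d)} {q r : Fin d → S}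
    (hiiB : ∀ v ∈ USet c V W i l l ∪ USet c V W i l (c l), ∀ j ∈ B, v j = q j)
    (hrB : ∀ j ∈ B, r j = q j) {w : Fin d → S} (hw : w ∈ PWords c V W i l) {j : Fin d}
    (hj : j ∈ B) : w j ≠ c (r j) := by
  obtain ⟨-, x, hxw, hxU⟩ := hw
  obtain ⟨v, hvU, hxv⟩ := Set.mem_iUnion₂.mp hxU
  rw [hrB j hj, ← hiiB v hvU j hj]
  exact ne_compl_of_mem_wordBox hxv hxw j

lemma PWords.isFlipClosed (hc : Function.Involutive c) (hnfix : ∀ s, c s ≠ s)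
    (hWcode : PolyboxCode c W) (hequiv : EquivalentCodes c V W) {A B : Set (Fin d)}
    (hABuniv : A ∪ B = {i}ᶜ) {p q r : Fin d → S}
    (hiA : ∀ w ∈ PWords c V W i l, ∀ j ∈ A, w j = p j)
    (hiiB : ∀ v ∈ USet c V W i l l ∪ USet c V W i l (c l), ∀ j ∈ B, v j = q j)
    (hrA : ∀ j ∈ A, r j = p j) (hrB : ∀ j ∈ B, r j = q j) :
    IsFlipClosed c r (PWords c V W i l) i := by
  intro w hw z hzr hzw
  have hB : B ⊆ {i}ᶜ := hABuniv ▸ Set.subset_union_right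
  obtain ⟨⟨hwW, hwl, hwl'⟩, x, hxw, hxU⟩ := id hw
  obtain ⟨v, hvU, hxv⟩ := Set.mem_iUnion₂.mp hxU
  have hvV : v ∈ V := hvU.elim (·.1) (·.1)
  have hwv : w i ≠ v i := by
    rcases hvU with h | h <;> rw [h.2.1]
    exacts [hwl, hwl']
  have hzB : z ∈ BoxOn c B v ∩ BoxOn c B w :=
    ⟨boxOn_congr (fun j hj => (hrB j hj).trans (hiiB v hvU j hj).symm) ▸ boxOn_anti hB r hzr,
      boxOn_anti hB w hzw⟩
  obtain ⟨Y, hYv, hwY, hwYj, hYB⟩ := exists_mem_wordBox_notMem hc hnfix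
    (ne_compl_of_mem_wordBox hxv hxw) hwv (fun h => hB h rfl) hzB
  obtain ⟨w', hw'W, hYw'⟩ : ∃ w' ∈ W, Y ∈ WordBox c w' := by
    have hYW : Y ∈ CodeReal c W := hequiv ▸ Set.mem_biUnion hvV hYv
    simpa only [CodeReal, Set.mem_iUnion, exists_prop] using hYW
  have hw'i : w' i = c (w i) :=
    hWcode.apply_eq_compl hwW hw'W (fun h => hwY (h ▸ (hYw' i).2))
      fun j hji => ne_compl_of_mem_ESet (hYw' j).1 (hwYj j hji) (hYw' j).2
  have hw'P : w' ∈ PWords c V W i l := by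
    refine ⟨⟨hw'W, ?_, ?_⟩, Y, hYw', Set.mem_biUnion hvU hYv⟩ <;> rw [hw'i]
    · exact fun h => hwl' (hc.eq_iff.mp h)
    · exact fun h => hwl (hc.injective h)
  refine ⟨w', hw'P, hw'i, fun j hji => ⟨(hzr j hji).1, ?_⟩⟩
  have hj : j ∈ A ∪ B := hABuniv ▸ hji
  rcases hj with hjA | hjB
  · rw [hiA w' hw'P j hjA, ← hrA j hjA]
    exact (hzr j hji).2
  · exact hYB j hjB ▸ (hYw' j).2

end PWords

theorem p_codes_r_equivalent_general {S : Type*}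
    (c : S → S) (hinv : ∀ s, c (c s) = s) (hnfix : ∀ s, c s ≠ s)
    (d : ℕ) (V W : Finset (Fin d → S))
    (hWcode : PolyboxCode c W)
    (hequiv : EquivalentCodes c V W)
    (i : Fin d) (l : S)
    (hUl : (USet c V W i l l).Nonempty)
    (A B : Set (Fin d)) (hABuniv : A ∪ B = {i}ᶜ)
    (p q : Fin d → S)
    (hiA : ∀ w ∈ PWords c V W i l, ∀ j ∈ A, w j = p j)
    (hiiB : ∀ v ∈ USet c V W i l l ∪ USet c V W i l (c l), ∀ j ∈ B, v j = q j)
    (r : Fin d → S) (hrA : ∀ j ∈ A, r j = p j) (hrB : ∀ j ∈ B, r j = q j) :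
    (∀ s : S, s ≠ l → s ≠ c l →
      BoxOn c ({i}ᶜ) r ∩
          (⋃ w ∈ {w : Fin d → S | w ∈ PWords c V W i l ∧ w i = s},
            BoxOn c ({i}ᶜ) w) =
        BoxOn c ({i}ᶜ) r ∩
          (⋃ w ∈ {w : Fin d → S | w ∈ PWords c V W i l ∧ w i = c s},
            BoxOn c ({i}ᶜ) w)) ∧
    (B.ncard ≤ 1 →
      (∃ u ∈ V, ∃ v ∈ V, TwinPair c u v) ∨ (∃ u ∈ W, ∃ v ∈ W, TwinPair c u v)) := by
  have hflip : IsFlipClosed c r (PWords c V W i l) i :=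
    PWords.isFlipClosed hinv hnfix hWcode hequiv hABuniv hiA hiiB hrA hrB
  refine ⟨fun s _ _ => (hflip.inter_biUnion_subset s).antisymm ?_, fun hB => Or.inr ?_⟩
  · simpa only [hinv] using hflip.inter_biUnion_subset (c s)
  · have hiB : i ∉ B := fun h => (hABuniv ▸ Or.inr h : i ∈ ({i}ᶜ : Set (Fin d))) rfl
    refine hflip.exists_twinPair hinv hnfix hWcode (fun w hw => hw.1.1) (PWords.nonempty hUl) hiB
      hB (fun w hw j hji hjB => ?_) (fun w hw j hj => PWords.ne_compl hiiB hrB hw hj)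
    have hjA : j ∈ A := (hABuniv ▸ hji : j ∈ A ∪ B).resolve_right hjB
    exact (hiA w hw j hjA).trans (hrA j hjA).symm

/-- Let `V, W ⊆ S^d` be disjoint equivalent polybox codes with
`U^{i,l} ≠ ∅`, and suppose `[d] \ {i} = A ∪ B` (disjointly) with words `p, q` such
that (i) every `w ∈ P` satisfies `w_A = p`, and (ii) every
`v ∈ U^{i,l} ∪ U^{i,l'}` satisfies `v_B = q`. Then for every `s ∈ S \ {l, l'}` the
codes `P^{i,s}_{i^c}` and `P^{i,s'}_{i^c}` are `r`-equivalent, where `r_A = p` and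
`r_B = q` (stated via cylinder realizations over the coordinates `≠ i`).
In particular, if `|B| ≤ 1`, then there is a twin pair in `V` or in `W`. -/
theorem p_codes_r_equivalent {S : Type*} [Fintype S] [DecidableEq S]
    (c : S → S) (hinv : ∀ s, c (c s) = s) (hnfix : ∀ s, c s ≠ s)
    (d : ℕ) (V W : Finset (Fin d → S))
    (hVcode : PolyboxCode c V) (hWcode : PolyboxCode c W)
    (hdisj : Disjoint V W) (hequiv : EquivalentCodes c V W)
    (i : Fin d) (l : S)
    (hUl : (USet c V W i l l).Nonempty)
    (A B : Set (Fin d)) (hABdisj : A ∩ B = ∅) (hABuniv : A ∪ B = {i}ᶜ)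
    (p q : Fin d → S)
    (hiA : ∀ w ∈ PWords c V W i l, ∀ j ∈ A, w j = p j)
    (hiiB : ∀ v ∈ USet c V W i l l ∪ USet c V W i l (c l), ∀ j ∈ B, v j = q j)
    (r : Fin d → S) (hrA : ∀ j ∈ A, r j = p j) (hrB : ∀ j ∈ B, r j = q j) :
    (∀ s : S, s ≠ l → s ≠ c l →
      BoxOn c ({i}ᶜ) r ∩
          (⋃ w ∈ {w : Fin d → S | w ∈ PWords c V W i l ∧ w i = s},
            BoxOn c ({i}ᶜ) w) =
        BoxOn c ({i}ᶜ) r ∩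
          (⋃ w ∈ {w : Fin d → S | w ∈ PWords c V W i l ∧ w i = c s},
            BoxOn c ({i}ᶜ) w)) ∧
    (B.ncard ≤ 1 →
      (∃ u ∈ V, ∃ v ∈ V, TwinPair c u v) ∨ (∃ u ∈ W, ∃ v ∈ W, TwinPair c u v)) :=
  p_codes_r_equivalent_general c hinv hnfix d V W hWcode hequiv i l hUl A B hABuniv p q hiA hiiB r
    hrA hrB
end
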